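/- arXiv:1511.08407 — 2 statements merged into one kernel-verified Lean document; each statement's English description precedes it below -/
import Mathlib

section
/- Let λ < 1/2 and let F = F_λ. Let X be a random variable with values in (0,∞) having tail law (ξ,β) and satisfying E[F(X)²] < ∞. For p > 0 and a positive integer n, set Y_{p,n} := F(pX + 1/n) − F(pβ + 1/n). Then for every ε > 0 there exists δ > 0 such that for all p > 0 and all positive integers n with n·p ≤ δ, one has |E[Y_{p,n}]| ≤ ε·√(φ(p,n)). -/
/-!
Write `t = 1/n` and `s = n p`, so `p = t s`. Since `F_λ' u = u ^ (λ - 1) > 0`, both `F (pX + t)`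
and `F (pβ + t)` lie above `F t`, hence
`|Y| ≤ (F (t + pX) - F t) + (F (t + pβ) - F t) ≤ t ^ λ (β s + (sX) ^ (3/4) / (3/4))`,
by `u ^ (λ - 1) ≤ t ^ (λ - 1)` resp. `u ^ (λ - 1) ≤ t ^ (λ - 3/4) u ^ (-1/4)` for `u ≥ t`.
The tail law makes `X` weak-`L¹`, so `E[X ^ (3/4)] < ∞` and
`|E Y| ≤ t ^ λ (β s + C s ^ (3/4))`.
On the other hand `√φ ≥ c t ^ λ s ^ (1/2)` for `s ≤ 1` because `λ < 1/2`, and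
`β s + C s ^ (3/4) = o(s ^ (1/2))` as `s → 0`.
-/

open MeasureTheory Real Filter Topology

/-- The transformation function `F_λ`. -/
noncomputable def Flam (lam : ℝ) (x : ℝ) : ℝ :=
  if lam = 0 then Real.log x else x ^ lam / lam

/-- The weight `φ(p,n) = p^{2λ} (1 + (βnp)⁻¹)^{-1+2λ}`. -/
noncomputable def phiW (lam β : ℝ) (p : ℝ) (n : ℕ) : ℝ :=
  p ^ (2 * lam) * (1 + (β * n * p)⁻¹) ^ (-1 + 2 * lam)

lemma Flam_sub_eq_integral (lam : ℝ) {a b : ℝ} (ha : 0 < a) (hab : a ≤ b) :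
    Flam lam b - Flam lam a = ∫ u in a..b, u ^ (lam - 1) := by
  have hb : 0 < b := ha.trans_le hab
  have h0 : (0 : ℝ) ∉ Set.uIcc a b := Set.notMem_uIcc_of_lt ha hb
  by_cases h : lam = 0
  · simp only [Flam, h, if_pos, zero_sub, rpow_neg_one]
    rw [integral_inv_of_pos ha hb, log_div hb.ne' ha.ne']
  · simp only [Flam, if_neg h]
    rw [integral_rpow (Or.inr ⟨by contrapose! h; linarith, h0⟩), sub_add_cancel, sub_div]

lemma Flam_le_Flam (lam : ℝ) {a b : ℝ} (ha : 0 < a) (hab : a ≤ b) :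
    Flam lam a ≤ Flam lam b := by
  have : 0 ≤ ∫ u in a..b, u ^ (lam - 1) :=
    intervalIntegral.integral_nonneg hab fun u hu => rpow_nonneg (ha.le.trans hu.1) _
  linarith [Flam_sub_eq_integral lam ha hab]

-- `u ^ (λ - 1) ≤ a ^ (λ - q) * u ^ (q - 1)` on `[a, a + h]`, and `t ↦ t ^ q` is subadditive.
lemma Flam_add_sub_le {lam q a h : ℝ} (hq : 0 < q) (hq1 : q ≤ 1) (hlam : lam ≤ q)
    (ha : 0 < a) (hh : 0 ≤ h) :
    Flam lam (a + h) - Flam lam a ≤ a ^ (lam - q) * h ^ q / q := by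
  have h0 : (0 : ℝ) ∉ Set.uIcc a (a + h) := Set.notMem_uIcc_of_lt ha (by linarith)
  rw [Flam_sub_eq_integral lam ha (by linarith)]
  calc (∫ u in a..a + h, u ^ (lam - 1))
      ≤ ∫ u in a..a + h, a ^ (lam - q) * u ^ (q - 1) := by
        refine intervalIntegral.integral_mono_on (by linarith)
          (intervalIntegral.intervalIntegrable_rpow (Or.inr h0))
          ((intervalIntegral.intervalIntegrable_rpow (Or.inr h0)).const_mul _) fun u hu => ?_
        have hu0 : 0 < u := ha.trans_le hu.1
        rw [show lam - 1 = (lam - q) + (q - 1) by ring, rpow_add hu0]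
        exact mul_le_mul_of_nonneg_right (rpow_le_rpow_of_nonpos ha hu.1 (by linarith))
          (rpow_nonneg hu0.le _)
    _ = a ^ (lam - q) * (((a + h) ^ q - a ^ q) / q) := by
        rw [intervalIntegral.integral_const_mul,
          integral_rpow (Or.inl (by linarith)), sub_add_cancel]
    _ ≤ a ^ (lam - q) * h ^ q / q := by
        rw [mul_div_assoc]
        gcongr
        linarith [rpow_add_le_add_rpow ha.le hh hq.le hq1]

lemma rpow_sub_mul_rpow {t p : ℝ} (ht : 0 < t) (hp : 0 ≤ p) (lam q : ℝ) :
    t ^ (lam - q) * p ^ q = t ^ lam * (p / t) ^ q := by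
  rw [div_rpow hp ht.le, rpow_sub ht]
  field_simp

lemma abs_Flam_add_sub_Flam_add_le {lam q t p x β : ℝ} (hq : 0 < q) (hq1 : q ≤ 1)
    (hlam : lam ≤ q) (ht : 0 < t) (hp : 0 ≤ p) (hx : 0 ≤ x) (hβ : 0 ≤ β) :
    |Flam lam (p * x + t) - Flam lam (p * β + t)|
      ≤ t ^ (lam - q) * p ^ q / q * x ^ q + t ^ (lam - 1) * p * β := by
  have hFx : Flam lam (p * x + t) - Flam lam t ≤ t ^ (lam - q) * p ^ q / q * x ^ q := by
    rw [add_comm]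
    refine (Flam_add_sub_le hq hq1 hlam ht (mul_nonneg hp hx)).trans_eq ?_
    rw [mul_rpow hp hx]
    ring
  have hFβ : Flam lam (p * β + t) - Flam lam t ≤ t ^ (lam - 1) * p * β := by
    rw [add_comm]
    refine (Flam_add_sub_le one_pos le_rfl (hlam.trans hq1) ht (mul_nonneg hp hβ)).trans_eq ?_
    rw [rpow_one, div_one, mul_assoc]
  have hFx₀ := Flam_le_Flam lam ht (le_add_of_nonneg_left (mul_nonneg hp hx))
  have hFβ₀ := Flam_le_Flam lam ht (le_add_of_nonneg_left (mul_nonneg hp hβ))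
  rw [abs_sub_le_iff]
  constructor <;> linarith

lemma abs_integral_Flam_add_sub_Flam_add_le {Ω : Type*} [MeasurableSpace Ω] {P : Measure Ω}
    [IsProbabilityMeasure P] {X : Ω → ℝ} {lam q t p β : ℝ} (hq : 0 < q) (hq1 : q ≤ 1)
    (hlam : lam ≤ q) (ht : 0 < t) (hp : 0 ≤ p) (hβ : 0 ≤ β) (hX : ∀ ω, 0 ≤ X ω)
    (hXq : Integrable (fun ω => X ω ^ q) P) :
    |∫ ω, (Flam lam (p * X ω + t) - Flam lam (p * β + t)) ∂P|
      ≤ t ^ lam * (β * (p / t) + (∫ ω, X ω ^ q ∂P) / q * (p / t) ^ q) := by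
  calc |∫ ω, (Flam lam (p * X ω + t) - Flam lam (p * β + t)) ∂P|
      ≤ ∫ ω, (t ^ (lam - q) * p ^ q / q * X ω ^ q + t ^ (lam - 1) * p * β) ∂P :=
        (Real.norm_eq_abs _).symm.trans_le <|
        norm_integral_le_of_norm_le ((hXq.const_mul _).add (integrable_const _))
          (.of_forall fun ω => abs_Flam_add_sub_Flam_add_le hq hq1 hlam ht hp (hX ω) hβ)
    _ = t ^ lam * (β * (p / t) + (∫ ω, X ω ^ q ∂P) / q * (p / t) ^ q) := by
        rw [integral_add (hXq.const_mul _) (integrable_const _), integral_const_mul,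
          integral_const, probReal_univ, one_smul]
        have h1 := rpow_sub_mul_rpow ht hp lam q
        have h2 := rpow_sub_mul_rpow ht hp lam 1
        simp only [rpow_one] at h2
        linear_combination ((∫ ω, X ω ^ q ∂P) / q) * h1 + β * h2

-- Layer cake: `∫ Y ^ q = q ∫₀^∞ μ {t ≤ Y} t ^ (q - 1) dt`, where `μ {t ≤ Y}` is
-- bounded by `μ univ` near `0` and by `C / t` near `∞`.
lemma integrable_rpow_of_meas_le_div {Ω : Type*} [MeasurableSpace Ω] {μ : Measure Ω}
    [IsFiniteMeasure μ] {Y : Ω → ℝ} {C q : ℝ} (hY : Measurable Y) (hY0 : ∀ ω, 0 ≤ Y ω)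
    (hC : 0 < C) (hq : 0 < q) (hq1 : q < 1)
    (htail : ∀ t, 0 < t → μ {ω | t ≤ Y ω} ≤ ENNReal.ofReal (C / t)) :
    Integrable (fun ω => Y ω ^ q) μ := by
  refine ⟨(hY.pow_const q).aestronglyMeasurable, ?_⟩
  rw [hasFiniteIntegral_iff_ofReal (.of_forall fun ω => rpow_nonneg (hY0 ω) q),
    lintegral_rpow_eq_lintegral_meas_le_mul μ (.of_forall hY0) hY.aemeasurable hq,
    ← Set.Ioc_union_Ioi_eq_Ioi hC.le,
    lintegral_union measurableSet_Ioi (Set.Ioc_disjoint_Ioi le_rfl)]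
  refine ENNReal.mul_lt_top ENNReal.ofReal_lt_top (ENNReal.add_lt_top.2 ⟨?_, ?_⟩)
  · calc ∫⁻ t in Set.Ioc 0 C, μ {ω | t ≤ Y ω} * ENNReal.ofReal (t ^ (q - 1))
        ≤ ∫⁻ t in Set.Ioc 0 C, μ Set.univ * ENNReal.ofReal (t ^ (q - 1)) :=
          lintegral_mono fun t => mul_le_mul_left (measure_mono (Set.subset_univ _)) _
      _ < ⊤ := by
          rw [lintegral_const_mul' _ _ (measure_ne_top μ _)]
          have hint : IntegrableOn (fun t : ℝ => t ^ (q - 1)) (Set.Ioc 0 C) :=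
            (intervalIntegral.intervalIntegrable_rpow' (by linarith)).1
          exact ENNReal.mul_lt_top (measure_lt_top μ _) hint.lintegral_lt_top
  · calc ∫⁻ t in Set.Ioi C, μ {ω | t ≤ Y ω} * ENNReal.ofReal (t ^ (q - 1))
        ≤ ∫⁻ t in Set.Ioi C, ENNReal.ofReal (C * t ^ (q - 2)) := by
          refine setLIntegral_mono' measurableSet_Ioi fun t (ht : C < t) => ?_
          have ht0 : 0 < t := hC.trans ht
          calc μ {ω | t ≤ Y ω} * ENNReal.ofReal (t ^ (q - 1))
              ≤ ENNReal.ofReal (C / t) * ENNReal.ofReal (t ^ (q - 1)) :=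
                mul_le_mul_left (htail t ht0) _
            _ = ENNReal.ofReal (C * t ^ (q - 2)) := by
                rw [← ENNReal.ofReal_mul (by positivity), show q - 1 = (q - 2) + 1 by ring,
                  rpow_add_one ht0.ne']
                field_simp
      _ < ⊤ := ((integrableOn_Ioi_rpow_of_lt (by linarith) hC).const_mul C).lintegral_lt_top

lemma meas_le_div_of_tail {Ω : Type*} [MeasurableSpace Ω] {P : Measure Ω}
    [IsProbabilityMeasure P] {X : Ω → ℝ} {ξ β : ℝ} (hξβ : ξ ≤ β)
    (htail : ∀ x : ℝ, β ≤ x → P {ω | x ≤ X ω} = ENNReal.ofReal (ξ / x))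
    {t : ℝ} (ht : 0 < t) : P {ω | t ≤ X ω} ≤ ENNReal.ofReal (β / t) := by
  rcases le_or_gt β t with hβt | htβ
  · rw [htail t hβt]
    exact ENNReal.ofReal_le_ofReal (div_le_div_of_nonneg_right hξβ ht.le)
  · refine prob_le_one.trans ?_
    rw [← ENNReal.ofReal_one]
    exact ENNReal.ofReal_le_ofReal ((one_le_div ht).2 htβ.le)

-- `a s + b s ^ q = s ^ r (a s ^ (1 - r) + b s ^ (q - r))`, and the bracket tends to `0` with `s`.
lemma exists_pos_forall_mul_add_mul_rpow_le {a b c q r : ℝ} (hrq : r < q)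
    (hr1 : r < 1) (hc : 0 < c) :
    ∃ δ > 0, ∀ s, 0 < s → s ≤ δ → a * s + b * s ^ q ≤ c * s ^ r := by
  set g : ℝ → ℝ := fun s => a * s ^ (1 - r) + b * s ^ (q - r)
  have hg : Continuous g :=
    (continuous_const.mul (continuous_rpow_const (by linarith))).add
      (continuous_const.mul (continuous_rpow_const (by linarith)))
  have hg0 : g 0 = 0 := by
    simp [g, zero_rpow (sub_pos.2 hr1).ne', zero_rpow (sub_pos.2 hrq).ne']
  obtain ⟨δ, hδ, hgδ⟩ := Metric.continuousAt_iff.1 hg.continuousAt c hc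
  refine ⟨δ / 2, half_pos hδ, fun s hs hsδ => ?_⟩
  have hgs : g s ≤ c := by
    have := hgδ (show dist s 0 < δ by rw [dist_zero_right, norm_of_nonneg hs.le]; linarith)
    rw [hg0, dist_zero_right] at this
    exact (le_abs_self _).trans this.le
  have e1 : s ^ r * s ^ (1 - r) = s := by rw [← rpow_add hs, add_sub_cancel, rpow_one]
  have e2 : s ^ r * s ^ (q - r) = s ^ q := by rw [← rpow_add hs, add_sub_cancel]
  calc a * s + b * s ^ q = s ^ r * g s := by linear_combination (-a) * e1 - b * e2
    _ ≤ s ^ r * c := mul_le_mul_of_nonneg_left hgs (rpow_nonneg hs.le r)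
    _ = c * s ^ r := mul_comm _ _

lemma sqrt_phiW {lam β p : ℝ} {n : ℕ} (hβ : 0 < β) (hp : 0 < p) :
    √(phiW lam β p n) = p ^ lam * (1 + (β * n * p)⁻¹) ^ (lam - 1 / 2) := by
  rw [phiW, sqrt_eq_rpow, mul_rpow (by positivity) (by positivity), ← rpow_mul hp.le,
    ← rpow_mul (by positivity)]
  ring_nf

lemma mul_rpow_le_sqrt_phiW {lam β p : ℝ} {n : ℕ} (hlam : lam ≤ 1 / 2) (hβ : 0 < β)
    (hp : 0 < p) (hn : 0 < n) (hnp : n * p ≤ 1) :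
    (β / (1 + β)) ^ (1 / 2 - lam) * ((1 / n) ^ lam * (n * p) ^ (1 / 2 : ℝ))
      ≤ √(phiW lam β p n) := by
  have hn' : (0 : ℝ) < n := Nat.cast_pos.2 hn
  set s : ℝ := n * p with hs_def
  have hs : 0 < s := by positivity
  have hbase : 1 + (β * n * p)⁻¹ ≤ (1 + β) / (β * s) := by
    rw [mul_assoc, ← hs_def, le_div_iff₀ (by positivity), add_mul,
      inv_mul_cancel₀ (by positivity)]
    nlinarith
  have e1 : ((1 + β) / (β * s)) ^ (lam - 1 / 2)
      = (β / (1 + β)) ^ (1 / 2 - lam) * s ^ (1 / 2 - lam) := by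
    rw [← inv_div, inv_rpow (by positivity), ← rpow_neg (by positivity), neg_sub,
      mul_div_right_comm, mul_rpow (by positivity) hs.le]
  have e2 : p ^ lam = (1 / n) ^ lam * s ^ lam := by
    rw [← mul_rpow (by positivity) hs.le, hs_def, ← mul_assoc, one_div_mul_cancel hn'.ne',
      one_mul]
  have e3 : s ^ lam * s ^ (1 / 2 - lam) = s ^ (1 / 2 : ℝ) := by
    rw [← rpow_add hs, add_sub_cancel]
  calc (β / (1 + β)) ^ (1 / 2 - lam) * ((1 / n) ^ lam * s ^ (1 / 2 : ℝ))
      = p ^ lam * ((1 + β) / (β * s)) ^ (lam - 1 / 2) := by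
        rw [e1, e2, ← e3]
        ring
    _ ≤ p ^ lam * (1 + (β * n * p)⁻¹) ^ (lam - 1 / 2) :=
        mul_le_mul_of_nonneg_left
          (rpow_le_rpow_of_nonpos (by positivity) hbase (by linarith)) (rpow_nonneg hp.le _)
    _ = √(phiW lam β p n) := (sqrt_phiW hβ hp).symm

theorem stmt_1_general
    {lam ξ β : ℝ} (hlam : lam < 1/2) (hξ : 0 < ξ) (hξβ : ξ ≤ β)
    {Ω : Type*} [MeasurableSpace Ω] (P : Measure Ω) [IsProbabilityMeasure P]
    (X : Ω → ℝ) (hX : Measurable X) (hXpos : ∀ ω, 0 < X ω)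
    (htail : ∀ x : ℝ, β ≤ x → P {ω | x ≤ X ω} = ENNReal.ofReal (ξ / x)) :
    ∀ ε : ℝ, 0 < ε → ∃ δ : ℝ, 0 < δ ∧ ∀ p : ℝ, 0 < p → ∀ n : ℕ, 0 < n → (n : ℝ) * p ≤ δ →
      |∫ ω, (Flam lam (p * X ω + 1/(n:ℝ)) - Flam lam (p * β + 1/(n:ℝ))) ∂P|
        ≤ ε * Real.sqrt (phiW lam β p n) := by
  intro ε hε
  have hβ : 0 < β := hξ.trans_le hξβ
  have hX0 : ∀ ω, 0 ≤ X ω := fun ω => (hXpos ω).le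
  have hXq : Integrable (fun ω => X ω ^ (3 / 4 : ℝ)) P :=
    integrable_rpow_of_meas_le_div hX hX0 hβ (by norm_num) (by norm_num)
      fun t ht => meas_le_div_of_tail hξβ htail ht
  set m := ∫ ω, X ω ^ (3 / 4 : ℝ) ∂P
  set κ := (β / (1 + β)) ^ (1 / 2 - lam)
  obtain ⟨δ, hδ, hsmall⟩ := exists_pos_forall_mul_add_mul_rpow_le
    (a := β) (b := m / (3 / 4)) (c := ε * κ)
    (q := 3 / 4) (r := 1 / 2) (by norm_num) (by norm_num) (by positivity)
  refine ⟨min δ 1, lt_min hδ one_pos, fun p hp n hn hnp => ?_⟩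
  have hn' : (0 : ℝ) < n := Nat.cast_pos.2 hn
  have hpn : p / (1 / (n : ℝ)) = n * p := by field_simp
  calc |∫ ω, (Flam lam (p * X ω + 1 / (n : ℝ)) - Flam lam (p * β + 1 / (n : ℝ))) ∂P|
      ≤ (1 / (n : ℝ)) ^ lam * (β * (n * p) + m / (3 / 4) * (n * p) ^ (3 / 4 : ℝ)) := by
        simpa only [hpn] using abs_integral_Flam_add_sub_Flam_add_le (by norm_num) (by norm_num)
          (by linarith) (one_div_pos.2 hn') hp.le hβ.le hX0 hXq
    _ ≤ (1 / (n : ℝ)) ^ lam * (ε * κ * (n * p) ^ (1 / 2 : ℝ)) := by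
        gcongr
        exact hsmall _ (by positivity) (hnp.trans (min_le_left _ _))
    _ = ε * (κ * ((1 / n) ^ lam * (n * p) ^ (1 / 2 : ℝ))) := by ring
    _ ≤ ε * √(phiW lam β p n) := by
        gcongr
        exact mul_rpow_le_sqrt_phiW hlam.le hβ hp hn (hnp.trans (min_le_right _ _))

theorem stmt_1
    {lam ξ β : ℝ} (hlam : lam < 1/2) (hξ : 0 < ξ) (hξβ : ξ ≤ β)
    {Ω : Type*} [MeasurableSpace Ω] (P : Measure Ω) [IsProbabilityMeasure P]
    (X : Ω → ℝ) (hX : Measurable X) (hXpos : ∀ ω, 0 < X ω)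
    (htail : ∀ x : ℝ, β ≤ x → P {ω | x ≤ X ω} = ENNReal.ofReal (ξ / x))
    (hmom : Integrable (fun ω => (Flam lam (X ω))^2) P) :
    ∀ ε : ℝ, 0 < ε → ∃ δ : ℝ, 0 < δ ∧ ∀ p : ℝ, 0 < p → ∀ n : ℕ, 0 < n → (n : ℝ) * p ≤ δ →
      |∫ ω, (Flam lam (p * X ω + 1/(n:ℝ)) - Flam lam (p * β + 1/(n:ℝ))) ∂P|
        ≤ ε * Real.sqrt (phiW lam β p n) :=
  stmt_1_general hlam hξ hξβ P X hX hXpos htail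
end

section
/- (Generalized weak law of large numbers with a Stolz–Cesàro step.) Let λ < 1/2 and β > 0, let (p_{i,n}) be a Zipf array, and set φ_{i,n} := φ(p_{i,n}, n). On a probability space, for each n ≥ 2 let U_{1,n}, …, U_{n,n} be independent integrable real random variables such that the family {U_{i,n}} is uniformly integrable relative to the weights {φ_{i,n}}. Suppose there is a real number ℓ such that for every ε > 0 there exists δ > 0 with: n·p_{i,n} ≤ δ implies |E[U_{i,n}]/φ_{i,n} − ℓ| ≤ ε, for all n ≥ 2 and 1 ≤ i ≤ n. Then (Σ_{i=1}^{n} U_{i,n})/(Σ_{i=1}^{n} φ_{i,n}) converges to ℓ in probability as n → ∞. -/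
open MeasureTheory Real Filter Topology ProbabilityTheory

/-- `p` is a Zipf array with constants `κ₁ ≤ κ₂`. -/
def IsZipfArray (p : ℕ → ℕ → ℝ) (κ₁ κ₂ : ℝ) : Prop :=
  0 < κ₁ ∧ κ₁ ≤ κ₂ ∧ ∀ n : ℕ, 2 ≤ n → ∀ i : ℕ, 1 ≤ i → i ≤ n →
    0 < p i n ∧ p i n ≤ 1 ∧
    κ₁ / ((i : ℝ) * Real.log n) ≤ p i n ∧ p i n ≤ κ₂ / ((i : ℝ) * Real.log n)

/-!
Truncate `U i n` at level `N φ_{i,n}`. The truncated variables are pairwise independent with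
variance at most `N φ_{i,n} E|U i n| = O(φ_{i,n}²)`, so by Chebyshev their centred sum is
`o(Φ_n)` in probability once `Σ_i φ_{i,n}² = o(Φ_n²)`, where `Φ_n = Σ_i φ_{i,n}`; by uniform
integrability the remainders have total `L¹` norm at most `ε Φ_n`, and Markov disposes of them.
The means are a Stolz–Cesàro step: `E U i n ≈ ℓ φ_{i,n}` wherever `n p_{i,n} ≤ δ`, and the other
indices carry a vanishing fraction of `Φ_n`.

Both smallness conditions come from the Zipf asymptotics. With `r = 1 - 2λ > 0` one has
`φ(p, n) = (βn)^r p / (1 + βnp)^r`, so `φ_{i,n} ≲ n^r / (i log n)`, with a matching lower bound for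
`i ≥ n / log n`; summing the harmonic series gives `Φ_n ≳ n^r log log n / log n`. On the other
hand every single `φ_{i,n}`, and the total weight of the indices with `n p_{i,n} > δ` (which
satisfy `i ≲ n / log n`, where `φ_{i,n} ≤ p_{i,n}^{2λ} ≈ (i log n)^{-2λ}`), are `O(n^r / log n)`.
-/

open Finset

lemma sum_Icc_rpow_le {e : ℝ} (he : -1 < e) (m : ℕ) :
    ∑ i ∈ Icc 1 m, (i : ℝ) ^ e ≤ max 1 (e + 1)⁻¹ * (m : ℝ) ^ (e + 1) := by
  set C := max 1 (e + 1)⁻¹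
  have he1 : 0 < e + 1 := by linarith
  -- for `e < 0` this is the concavity of `x ↦ x ^ (e + 1)`, in the form of Bernoulli's inequality
  have step : ∀ x : ℝ, 0 ≤ x → (x + 1) ^ e ≤ C * ((x + 1) ^ (e + 1) - x ^ (e + 1)) := by
    intro x hx
    have hx1 : 0 < x + 1 := by linarith
    have hpos : 0 < (x + 1) ^ e := rpow_pos_of_pos hx1 e
    have hsucc : (x + 1) ^ (e + 1) = (x + 1) ^ e * (x + 1) := rpow_add_one hx1.ne' e
    rcases le_or_gt 0 e with he0 | he0
    · have : x ^ (e + 1) ≤ (x + 1) ^ e * x := by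
        rw [rpow_add_one' hx he1.ne']
        exact mul_le_mul_of_nonneg_right (rpow_le_rpow hx (by linarith) he0) hx
      calc (x + 1) ^ e ≤ (x + 1) ^ (e + 1) - x ^ (e + 1) := by rw [hsucc]; linarith
        _ ≤ C * ((x + 1) ^ (e + 1) - x ^ (e + 1)) :=
          le_mul_of_one_le_left (by rw [hsucc]; linarith) (le_max_left _ _)
    · have hB := rpow_one_add_le_one_add_mul_self (s := -(x + 1)⁻¹)
        (by rw [neg_le_neg_iff]; exact inv_le_one_of_one_le₀ (by linarith)) he1.le (by linarith)
      have hx' : x = (x + 1) * (1 + -(x + 1)⁻¹) := by field_simp; ring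
      have h1 : 0 ≤ 1 + -(x + 1)⁻¹ := by
        rw [← sub_eq_add_neg, sub_nonneg]; exact inv_le_one_of_one_le₀ (by linarith)
      have : x ^ (e + 1) ≤ (x + 1) ^ (e + 1) - (e + 1) * (x + 1) ^ e := by
        calc x ^ (e + 1) = (x + 1) ^ (e + 1) * (1 + -(x + 1)⁻¹) ^ (e + 1) := by
              conv_lhs => rw [hx']
              exact mul_rpow hx1.le h1
          _ ≤ (x + 1) ^ (e + 1) * (1 + (e + 1) * -(x + 1)⁻¹) :=
              mul_le_mul_of_nonneg_left hB (by positivity)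
          _ = (x + 1) ^ (e + 1) - (e + 1) * (x + 1) ^ e := by
              rw [hsucc]; field_simp; ring
      calc (x + 1) ^ e ≤ (e + 1)⁻¹ * ((x + 1) ^ (e + 1) - x ^ (e + 1)) := by
            rw [le_inv_mul_iff₀ he1]; linarith
        _ ≤ C * ((x + 1) ^ (e + 1) - x ^ (e + 1)) :=
            mul_le_mul_of_nonneg_right (le_max_right _ _) (by nlinarith)
  induction m with
  | zero => simp [zero_rpow he1.ne']
  | succ m ih =>
    rw [sum_Icc_succ_top (by omega)]
    have := step m m.cast_nonneg
    push_cast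
    linarith

lemma log_sub_log_sub_one_le_sum_Ioc_inv {k n : ℕ} (hkn : k ≤ n) :
    log n - log k - 1 ≤ ∑ i ∈ Ioc k n, (i : ℝ)⁻¹ := by
  have hH : ∀ m : ℕ, (harmonic m : ℝ) = ∑ i ∈ Ioc 0 m, (i : ℝ)⁻¹ := fun m => by
    simp [harmonic_eq_sum_Icc, ← Icc_add_one_left_eq_Ioc]
  have hsplit := sum_Ioc_consecutive (fun i : ℕ => (i : ℝ)⁻¹) k.zero_le hkn
  have hn : log n ≤ log (n + 1 : ℕ) := by
    rcases n.eq_zero_or_pos with rfl | hn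
    · simp
    · exact log_le_log (by positivity) (by push_cast; linarith)
  linarith [log_add_one_le_harmonic n, harmonic_le_one_add_log k, hH n, hH k]

lemma tendsto_sum_div_sum_of_tendsto_head {ν ι : Type*} {l : Filter ν} {s : ν → Finset ι}
    {a w q : ν → ι → ℝ} {ℓ C : ℝ}
    (hne : ∀ᶠ n in l, (s n).Nonempty) (hw : ∀ᶠ n in l, ∀ i ∈ s n, 0 < w n i)
    (ha : ∀ᶠ n in l, ∀ i ∈ s n, |a n i| ≤ C * w n i)
    (hgood : ∀ ε > 0, ∃ δ > 0, ∀ᶠ n in l, ∀ i ∈ s n, q n i ≤ δ → |a n i / w n i - ℓ| ≤ ε)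
    (hhead : ∀ δ > 0, Tendsto (fun n => (∑ i ∈ s n with δ < q n i, w n i) / ∑ i ∈ s n, w n i)
      l (𝓝 0)) :
    Tendsto (fun n => (∑ i ∈ s n, a n i) / ∑ i ∈ s n, w n i) l (𝓝 ℓ) := by
  rw [Metric.tendsto_nhds]
  intro ε hε
  obtain ⟨δ, hδ, hδgood⟩ := hgood (ε / 2) (by positivity)
  have hsmall : ∀ᶠ n in l,
      (C + |ℓ|) * ((∑ i ∈ s n with δ < q n i, w n i) / ∑ i ∈ s n, w n i) < ε / 2 := by
    have := (hhead δ hδ).const_mul (C + |ℓ|)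
    rw [mul_zero] at this
    exact this.eventually (gt_mem_nhds (by positivity))
  filter_upwards [hne, hw, ha, hδgood, hsmall] with n hne hw ha hδgood hsmall
  set W := ∑ i ∈ s n, w n i
  have hW : 0 < W := sum_pos hw hne
  have hterm : ∀ i ∈ s n, |a n i - ℓ * w n i|
      ≤ ε / 2 * w n i + (C + |ℓ|) * (if δ < q n i then w n i else 0) := by
    intro i hi
    split_ifs with hq
    · have : |ℓ * w n i| = |ℓ| * w n i := by rw [abs_mul, abs_of_pos (hw i hi)]
      nlinarith [abs_sub (a n i) (ℓ * w n i), ha i hi, hw i hi]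
    · have hwi := hw i hi
      rw [show a n i - ℓ * w n i = w n i * (a n i / w n i - ℓ) by field_simp, abs_mul,
        abs_of_pos hwi, mul_zero, add_zero, mul_comm (ε / 2)]
      exact mul_le_mul_of_nonneg_left (hδgood i hi (not_lt.1 hq)) hwi.le
  have hsum : |∑ i ∈ s n, a n i - ℓ * W|
      ≤ ε / 2 * W + (C + |ℓ|) * ∑ i ∈ s n with δ < q n i, w n i := by
    rw [mul_sum, ← sum_sub_distrib, sum_filter, mul_sum, mul_sum, ← sum_add_distrib]
    exact (abs_sum_le_sum_abs _ _).trans (sum_le_sum hterm)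
  rw [Real.dist_eq, div_sub' hW.ne', abs_div, abs_of_pos hW, div_lt_iff₀ hW, mul_comm W]
  rw [mul_div_assoc', div_lt_iff₀ hW] at hsmall
  linarith

section Probability

variable {Ω ι ν : Type*} [MeasurableSpace Ω] {P : Measure Ω} [IsProbabilityMeasure P]

lemma integral_abs_le_add_setIntegral {X : Ω → ℝ} (hX : Integrable X P) {a : ℝ} (ha : 0 ≤ a) :
    ∫ ω, |X ω| ∂P ≤ a + ∫ ω in {ω | a < |X ω|}, |X ω| ∂P := by
  have hs : NullMeasurableSet {ω | a < |X ω|} P :=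
    nullMeasurableSet_lt aemeasurable_const hX.aemeasurable.abs
  calc ∫ ω, |X ω| ∂P ≤ ∫ ω, (a + {ω | a < |X ω|}.indicator (fun ω => |X ω|) ω) ∂P := by
        refine integral_mono hX.abs ((integrable_const a).add (hX.abs.indicator₀ hs)) fun ω => ?_
        by_cases h : a < |X ω|
        · simp [h, ha]
        · simp only [Set.indicator_of_notMem (show ω ∉ {ω | a < |X ω|} from h)]
          linarith [not_lt.1 h]
    _ = a + ∫ ω in {ω | a < |X ω|}, |X ω| ∂P := by
        rw [integral_add (integrable_const a) (hX.abs.indicator₀ hs), integral_const,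
          integral_indicator₀ hs]
        simp

lemma measure_abs_sub_integral_ge_le {Z : Ω → ℝ} (hZ : Integrable Z P) {a : ℝ} (ha : 0 < a) :
    P {ω | a ≤ |Z ω - ∫ ω', Z ω' ∂P|} ≤ ENNReal.ofReal (2 * (∫ ω, |Z ω| ∂P) / a) := by
  have hmarkov := mul_meas_ge_le_integral_of_nonneg
    (ae_of_all _ fun ω => abs_nonneg (Z ω - ∫ ω', Z ω' ∂P)) (hZ.sub (integrable_const _)).abs a
  have h2 : ∫ ω, |Z ω - ∫ ω', Z ω' ∂P| ∂P ≤ 2 * ∫ ω, |Z ω| ∂P :=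
    calc _ ≤ ∫ ω, (|Z ω| + |∫ ω', Z ω' ∂P|) ∂P :=
          integral_mono (hZ.sub (integrable_const _)).abs (hZ.abs.add (integrable_const _))
            fun ω => abs_sub _ _
      _ = ∫ ω, |Z ω| ∂P + |∫ ω', Z ω' ∂P| := by
          rw [integral_add hZ.abs (integrable_const _), integral_const]; simp
      _ ≤ 2 * ∫ ω, |Z ω| ∂P := by linarith [abs_integral_le_integral_abs (f := Z) (μ := P)]
  rw [← ofReal_measureReal]
  exact ENNReal.ofReal_le_ofReal (by rw [le_div_iff₀ ha]; linarith)

lemma variance_truncation_le {X : Ω → ℝ} (hX : Integrable X P) {c : ℝ} (hc : 0 ≤ c) :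
    variance (truncation X c) P ≤ c * ∫ ω, |X ω| ∂P := by
  have hmem : MemLp (truncation X c) 2 P := hX.1.memLp_truncation
  calc variance (truncation X c) P ≤ ∫ ω, truncation X c ω ^ 2 ∂P :=
        variance_le_expectation_sq hX.1.truncation
    _ ≤ ∫ ω, c * |X ω| ∂P := by
        refine integral_mono hmem.integrable_sq (hX.abs.const_mul c) fun ω => ?_
        rw [← sq_abs]
        have := abs_truncation_le_bound X c ω
        rw [abs_of_nonneg hc] at this
        nlinarith [abs_truncation_le_abs_self X c ω, abs_nonneg (truncation X c ω)]
    _ = c * ∫ ω, |X ω| ∂P := integral_const_mul c _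

lemma integral_abs_sub_truncation_le {X : Ω → ℝ} (hX : Integrable X P) (c : ℝ) :
    ∫ ω, |X ω - truncation X c ω| ∂P ≤ ∫ ω in {ω | c ≤ |X ω|}, |X ω| ∂P := by
  have hs : NullMeasurableSet {ω | c ≤ |X ω|} P :=
    nullMeasurableSet_le aemeasurable_const hX.aemeasurable.abs
  rw [← integral_indicator₀ hs]
  refine integral_mono (hX.sub hX.1.integrable_truncation).abs (hX.abs.indicator₀ hs) fun ω => ?_
  by_cases h : X ω ∈ Set.Ioc (-c) c
  · simp [truncation, h, Set.indicator_nonneg]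
  · have : c ≤ |X ω| := by
      rw [Set.mem_Ioc, not_and_or, not_lt, not_le] at h
      rcases h with h | h
      · linarith [neg_le_abs (X ω)]
      · exact h.le.trans (le_abs_self _)
    simp [truncation, h, this]

theorem measure_abs_sum_sub_integral_ge_le {s : Finset ι} {X : ι → Ω → ℝ} {c : ι → ℝ} {t : ℝ}
    (hint : ∀ i ∈ s, Integrable (X i) P)
    (hindep : Set.Pairwise ↑s fun i j => IndepFun (X i) (X j) P) (hc : ∀ i ∈ s, 0 ≤ c i)
    (ht : 0 < t) :
    P {ω | t ≤ |∑ i ∈ s, X i ω - ∑ i ∈ s, ∫ ω', X i ω' ∂P|}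
      ≤ ENNReal.ofReal (4 / t ^ 2 * ∑ i ∈ s, c i * ∫ ω, |X i ω| ∂P
        + 4 / t * ∑ i ∈ s, ∫ ω in {ω | c i ≤ |X i ω|}, |X i ω| ∂P) := by
  set V := fun i => truncation (X i) (c i)
  have hVint : ∀ i ∈ s, Integrable (V i) P := fun i hi => (hint i hi).1.integrable_truncation
  have hRint : ∀ i ∈ s, Integrable (X i - V i) P := fun i hi => (hint i hi).sub (hVint i hi)
  set T := ∑ i ∈ s, V i
  set R := ∑ i ∈ s, (X i - V i)
  -- the truncated part is controlled by Chebyshev, the remainder by Markov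
  have hT : P {ω | t / 2 ≤ |T ω - ∫ ω', T ω' ∂P|}
      ≤ ENNReal.ofReal (4 / t ^ 2 * ∑ i ∈ s, c i * ∫ ω, |X i ω| ∂P) := by
    refine (meas_ge_le_variance_div_sq (memLp_finsetSum' s fun i hi =>
      (hint i hi).1.memLp_truncation) (by positivity)).trans (ENNReal.ofReal_le_ofReal ?_)
    rw [IndepFun.variance_sum (fun i hi => (hint i hi).1.memLp_truncation)
      fun i hi j hj hij => (hindep hi hj hij).comp (measurable_id.indicator measurableSet_Ioc)
        (measurable_id.indicator measurableSet_Ioc)]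
    calc (∑ i ∈ s, variance (V i) P) / (t / 2) ^ 2
        ≤ (∑ i ∈ s, c i * ∫ ω, |X i ω| ∂P) / (t / 2) ^ 2 := by
          gcongr with i hi
          exact variance_truncation_le (hint i hi) (hc i hi)
      _ = _ := by ring
  have hR : P {ω | t / 2 ≤ |R ω - ∫ ω', R ω' ∂P|}
      ≤ ENNReal.ofReal (4 / t * ∑ i ∈ s, ∫ ω in {ω | c i ≤ |X i ω|}, |X i ω| ∂P) := by
    refine (measure_abs_sub_integral_ge_le (integrable_finsetSum' s hRint) (by positivity)).trans
      (ENNReal.ofReal_le_ofReal ?_)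
    have : ∫ ω, |R ω| ∂P ≤ ∑ i ∈ s, ∫ ω in {ω | c i ≤ |X i ω|}, |X i ω| ∂P := by
      calc ∫ ω, |R ω| ∂P ≤ ∫ ω, ∑ i ∈ s, |X i ω - V i ω| ∂P := by
            refine integral_mono (integrable_finsetSum' s hRint).abs
              (integrable_finsetSum s fun i hi => (hRint i hi).abs) fun ω => ?_
            simpa [R] using abs_sum_le_sum_abs (fun i => X i ω - V i ω) s
        _ = ∑ i ∈ s, ∫ ω, |X i ω - V i ω| ∂P := integral_finsetSum s fun i hi => (hRint i hi).abs
        _ ≤ _ := sum_le_sum fun i hi => integral_abs_sub_truncation_le (hint i hi) (c i)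
    rw [div_le_iff₀ (by positivity)]
    field_simp
    linarith
  have hsplit : ∀ ω, ∑ i ∈ s, X i ω - ∑ i ∈ s, ∫ ω', X i ω' ∂P
      = (T ω - ∫ ω', T ω' ∂P) + (R ω - ∫ ω', R ω' ∂P) := by
    intro ω
    have hER : ∫ ω', R ω' ∂P = ∑ i ∈ s, ∫ ω', X i ω' ∂P - ∑ i ∈ s, ∫ ω', V i ω' ∂P := by
      simp only [R, Finset.sum_apply, Pi.sub_apply]
      rw [integral_finsetSum s (f := fun i ω => X i ω - V i ω) hRint, ← sum_sub_distrib]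
      exact sum_congr rfl fun i hi => integral_sub (hint i hi) (hVint i hi)
    have hET : ∫ ω', T ω' ∂P = ∑ i ∈ s, ∫ ω', V i ω' ∂P := by
      simp only [T, Finset.sum_apply]
      exact integral_finsetSum s hVint
    rw [hER, hET]
    simp only [R, T, Finset.sum_apply, Pi.sub_apply, sum_sub_distrib]
    ring
  calc P {ω | t ≤ |∑ i ∈ s, X i ω - ∑ i ∈ s, ∫ ω', X i ω' ∂P|}
      ≤ P ({ω | t / 2 ≤ |T ω - ∫ ω', T ω' ∂P|} ∪ {ω | t / 2 ≤ |R ω - ∫ ω', R ω' ∂P|}) := by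
        refine measure_mono fun ω hω => ?_
        by_contra h
        simp only [Set.mem_union, Set.mem_ofPred_eq, not_or, not_le] at h hω
        rw [hsplit] at hω
        linarith [abs_add_le (T ω - ∫ ω', T ω' ∂P) (R ω - ∫ ω', R ω' ∂P)]
    _ ≤ _ := (measure_union_le _ _).trans (by
        rw [ENNReal.ofReal_add (mul_nonneg (by positivity) (sum_nonneg fun i hi =>
          mul_nonneg (hc i hi) (integral_nonneg fun ω => abs_nonneg _)))
          (mul_nonneg (by positivity) (sum_nonneg fun i _ =>
            integral_nonneg fun ω => abs_nonneg _))]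
        exact add_le_add hT hR)

lemma measure_abs_sum_sub_integral_ge_mul_sum_le {s : Finset ι} {X : ι → Ω → ℝ} {w : ι → ℝ}
    {N C ε t : ℝ}
    (hint : ∀ i ∈ s, Integrable (X i) P)
    (hindep : Set.Pairwise ↑s fun i j => IndepFun (X i) (X j) P)
    (hw : ∀ i ∈ s, 0 < w i) (hW : 0 < ∑ i ∈ s, w i) (hN : 0 < N) (ht : 0 < t)
    (hC : ∀ i ∈ s, ∫ ω, |X i ω| ∂P ≤ C * w i)
    (hUI : ∀ i ∈ s, ∫ ω in {ω | N * w i < |X i ω|}, |X i ω| ∂P ≤ ε * w i) :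
    P {ω | t * ∑ i ∈ s, w i ≤ |∑ i ∈ s, X i ω - ∑ i ∈ s, ∫ ω', X i ω' ∂P|}
      ≤ ENNReal.ofReal (8 * N * C / t ^ 2 * ((∑ i ∈ s, w i ^ 2) / (∑ i ∈ s, w i) ^ 2)
        + 4 * ε / t) := by
  set W := ∑ i ∈ s, w i with hWdef
  -- `truncation` keeps `(-c, c]`, so its tail is `{c ≤ |X|}`; the level `2 N w i` puts that tail
  -- inside `{N w i < |X i|}`
  refine (measure_abs_sum_sub_integral_ge_le hint hindep (c := fun i => 2 * N * w i)
    (fun i hi => by have := hw i hi; positivity) (by positivity)).trans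
    (ENNReal.ofReal_le_ofReal (add_le_add ?_ ?_))
  · calc 4 / (t * W) ^ 2 * ∑ i ∈ s, 2 * N * w i * ∫ ω, |X i ω| ∂P
        ≤ 4 / (t * W) ^ 2 * ∑ i ∈ s, 2 * N * C * w i ^ 2 := by
          refine mul_le_mul_of_nonneg_left (sum_le_sum fun i hi => ?_) (by positivity)
          have := hw i hi
          calc 2 * N * w i * ∫ ω, |X i ω| ∂P ≤ 2 * N * w i * (C * w i) := by gcongr; exact hC i hi
            _ = 2 * N * C * w i ^ 2 := by ring
      _ = _ := by rw [← mul_sum]; field_simp; ring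
  · calc 4 / (t * W) * ∑ i ∈ s, ∫ ω in {ω | 2 * N * w i ≤ |X i ω|}, |X i ω| ∂P
        ≤ 4 / (t * W) * ∑ i ∈ s, ε * w i := by
          gcongr with i hi
          refine le_trans (setIntegral_mono_set (hint i hi).abs.integrableOn
            (ae_of_all _ fun ω => abs_nonneg _) (ae_of_all _ fun ω hω => ?_)) (hUI i hi)
          have := hw i hi
          exact lt_of_lt_of_le (by nlinarith) hω
      _ = _ := by rw [← mul_sum, ← hWdef]; field_simp

theorem tendstoInMeasure_sum_div_sum {l : Filter ν} {s : ν → Finset ι} {X : ν → ι → Ω → ℝ}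
    {w : ν → ι → ℝ} {ℓ : ℝ}
    (hne : ∀ᶠ n in l, (s n).Nonempty) (hw : ∀ᶠ n in l, ∀ i ∈ s n, 0 < w n i)
    (hint : ∀ᶠ n in l, ∀ i ∈ s n, Integrable (X n i) P)
    (hindep : ∀ᶠ n in l, Set.Pairwise ↑(s n) fun i j => IndepFun (X n i) (X n j) P)
    (hUI : ∀ ε > 0, ∃ N > 0, ∀ᶠ n in l, ∀ i ∈ s n,
      ∫ ω in {ω | N * w n i < |X n i ω|}, |X n i ω| ∂P ≤ ε * w n i)
    (hsq : Tendsto (fun n => (∑ i ∈ s n, w n i ^ 2) / (∑ i ∈ s n, w n i) ^ 2) l (𝓝 0))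
    (hmean : Tendsto (fun n => (∑ i ∈ s n, ∫ ω, X n i ω ∂P) / ∑ i ∈ s n, w n i) l (𝓝 ℓ)) :
    TendstoInMeasure P (fun n ω => (∑ i ∈ s n, X n i ω) / ∑ i ∈ s n, w n i) l (fun _ => ℓ) := by
  rw [tendstoInMeasure_iff_dist]
  intro ε hε
  rw [ENNReal.tendsto_nhds_zero]
  intro η hη
  obtain ⟨r, -, hr0, hrη⟩ := ENNReal.lt_iff_exists_real_btwn.1 hη
  have hr : 0 < r := ENNReal.ofReal_pos.1 hr0
  obtain ⟨N₀, hN₀, hUI₀⟩ := hUI 1 one_pos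
  obtain ⟨N, hN, hUIN⟩ := hUI (ε * r / 16) (by positivity)
  have hvar : ∀ᶠ n in l, 32 * N * (N₀ + 1) / ε ^ 2
      * ((∑ i ∈ s n, w n i ^ 2) / (∑ i ∈ s n, w n i) ^ 2) < r / 2 := by
    have := hsq.const_mul (32 * N * (N₀ + 1) / ε ^ 2)
    rw [mul_zero] at this
    exact this.eventually (gt_mem_nhds (by positivity))
  filter_upwards [hvar, hmean.eventually (Metric.ball_mem_nhds ℓ (half_pos hε)), hne, hw, hint,
    hindep, hUI₀, hUIN] with n hvar hmean hne hw hint hindep hUI₀ hUIN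
  have hW : 0 < ∑ i ∈ s n, w n i := sum_pos hw hne
  have hC : ∀ i ∈ s n, ∫ ω, |X n i ω| ∂P ≤ (N₀ + 1) * w n i := fun i hi => by
    have := integral_abs_le_add_setIntegral (hint i hi) (mul_nonneg hN₀.le (hw i hi).le)
    linarith [hUI₀ i hi]
  have hsub : {ω | ε ≤ dist ((∑ i ∈ s n, X n i ω) / ∑ i ∈ s n, w n i) ℓ}
      ⊆ {ω | ε / 2 * ∑ i ∈ s n, w n i
          ≤ |∑ i ∈ s n, X n i ω - ∑ i ∈ s n, ∫ ω', X n i ω' ∂P|} := fun ω hω => by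
    rw [Set.mem_ofPred_eq, Real.dist_eq] at hω
    rw [Real.dist_eq] at hmean
    rw [Set.mem_ofPred_eq, ← le_div_iff₀ hW, ← abs_of_pos hW, ← abs_div, sub_div]
    linarith [abs_sub_le ((∑ i ∈ s n, X n i ω) / ∑ i ∈ s n, w n i)
      ((∑ i ∈ s n, ∫ ω', X n i ω' ∂P) / ∑ i ∈ s n, w n i) ℓ]
  calc _ ≤ _ := measure_mono hsub
    _ ≤ _ := measure_abs_sum_sub_integral_ge_mul_sum_le hint hindep hw hW hN (half_pos hε) hC hUIN
    _ ≤ ENNReal.ofReal r := ENNReal.ofReal_le_ofReal (by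
        rw [show 4 * (ε * r / 16) / (ε / 2) = r / 2 by field_simp; ring,
          show 8 * N * (N₀ + 1) / (ε / 2) ^ 2 = 32 * N * (N₀ + 1) / ε ^ 2 by ring]
        linarith)
    _ ≤ η := hrη.le

end Probability

section Weight

variable {lam β p : ℝ} {n : ℕ}

lemma phiW_eq (hp : 0 < p) (hβ : 0 < β) (hn : 0 < n) :
    phiW lam β p n
      = β ^ (1 - 2 * lam) * n ^ (1 - 2 * lam) * p / (1 + β * n * p) ^ (1 - 2 * lam) := by
  have hx : 0 < β * n * p := by positivity
  have hp' : p ^ (2 * lam) * p ^ (1 - 2 * lam) = p := by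
    rw [← rpow_add hp]; norm_num
  rw [phiW, show -1 + 2 * lam = -(1 - 2 * lam) by ring, rpow_neg (by positivity),
    show 1 + (β * n * p)⁻¹ = (1 + β * n * p) / (β * n * p) by field_simp; ring,
    div_rpow (by positivity) hx.le, mul_rpow (by positivity) hp.le,
    mul_rpow hβ.le (by positivity)]
  field_simp
  exact hp'

lemma phiW_pos (hp : 0 < p) (hβ : 0 < β) (hn : 0 < n) :
    0 < phiW lam β p n := by
  rw [phiW_eq hp hβ hn]; positivity

lemma phiW_le_rpow (hlam : lam ≤ 1 / 2) (hp : 0 < p) (hβ : 0 < β) (hn : 0 < n) :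
    phiW lam β p n ≤ p ^ (2 * lam) := by
  have hx : 0 < (β * n * p)⁻¹ := by positivity
  exact mul_le_of_le_one_right (by positivity)
    (rpow_le_one_of_one_le_of_nonpos (by linarith) (by linarith))

lemma phiW_le_mul (hlam : lam ≤ 1 / 2) (hp : 0 < p) (hβ : 0 < β) (hn : 0 < n) :
    phiW lam β p n ≤ β ^ (1 - 2 * lam) * n ^ (1 - 2 * lam) * p := by
  rw [phiW_eq hp hβ hn]
  have hx : 0 < β * n * p := by positivity
  exact div_le_self (by positivity) (one_le_rpow (by linarith) (by linarith))

lemma div_le_phiW {c : ℝ} (hlam : lam ≤ 1 / 2) (hp : 0 < p) (hβ : 0 < β) (hn : 0 < n)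
    (hc : β * n * p ≤ c) :
    β ^ (1 - 2 * lam) * n ^ (1 - 2 * lam) * p / (1 + c) ^ (1 - 2 * lam) ≤ phiW lam β p n := by
  rw [phiW_eq hp hβ hn]
  gcongr
  linarith

end Weight

namespace IsZipfArray

variable {lam β κ₁ κ₂ : ℝ} {p : ℕ → ℕ → ℝ} {n i : ℕ}

lemma pos (hz : IsZipfArray p κ₁ κ₂) (hn : 2 ≤ n) (hi : i ∈ Icc 1 n) : 0 < p i n :=
  (hz.2.2 n hn i (mem_Icc.1 hi).1 (mem_Icc.1 hi).2).1

lemma le_div_log (hz : IsZipfArray p κ₁ κ₂) (hn : 2 ≤ n) (hi : i ∈ Icc 1 n) :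
    p i n ≤ κ₂ / (i * log n) :=
  (hz.2.2 n hn i (mem_Icc.1 hi).1 (mem_Icc.1 hi).2).2.2.2

lemma div_log_le (hz : IsZipfArray p κ₁ κ₂) (hn : 2 ≤ n) (hi : i ∈ Icc 1 n) :
    κ₁ / (i * log n) ≤ p i n :=
  (hz.2.2 n hn i (mem_Icc.1 hi).1 (mem_Icc.1 hi).2).2.2.1

lemma phiW_pos (hz : IsZipfArray p κ₁ κ₂) (hβ : 0 < β) (hn : 2 ≤ n) (hi : i ∈ Icc 1 n) :
    0 < phiW lam β (p i n) n :=
  _root_.phiW_pos (hz.pos hn hi) hβ (by omega)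

lemma phiW_le_div (hz : IsZipfArray p κ₁ κ₂) (hlam : lam ≤ 1 / 2) (hβ : 0 < β) (hn : 2 ≤ n)
    (hi : i ∈ Icc 1 n) :
    phiW lam β (p i n) n ≤ β ^ (1 - 2 * lam) * κ₂ * (n ^ (1 - 2 * lam) / log n) / i := by
  calc phiW lam β (p i n) n ≤ β ^ (1 - 2 * lam) * n ^ (1 - 2 * lam) * p i n :=
        phiW_le_mul hlam (hz.pos hn hi) hβ (by omega)
    _ ≤ β ^ (1 - 2 * lam) * n ^ (1 - 2 * lam) * (κ₂ / (i * log n)) := by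
        gcongr; exact hz.le_div_log hn hi
    _ = _ := by ring

lemma le_phiW_of_le_mul_log (hz : IsZipfArray p κ₁ κ₂) (hlam : lam ≤ 1 / 2) (hβ : 0 < β)
    (hn : 2 ≤ n) (hi : i ∈ Icc 1 n) (htail : n ≤ i * log n) :
    κ₁ * β ^ (1 - 2 * lam) / (1 + β * κ₂) ^ (1 - 2 * lam) * (n ^ (1 - 2 * lam) / log n) / i
      ≤ phiW lam β (p i n) n := by
  have hL : 0 < log n := log_pos (by exact_mod_cast hn)
  have hi0 : (0 : ℝ) < i := by exact_mod_cast (mem_Icc.1 hi).1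
  have hnp : β * n * p i n ≤ β * κ₂ := by
    rw [mul_assoc]
    gcongr
    calc n * p i n ≤ n * (κ₂ / (i * log n)) := by gcongr; exact hz.le_div_log hn hi
      _ ≤ (i * log n) * (κ₂ / (i * log n)) := by
          gcongr
          exact div_nonneg (hz.1.trans_le hz.2.1).le (by positivity)
      _ = κ₂ := by field_simp
  calc κ₁ * β ^ (1 - 2 * lam) / (1 + β * κ₂) ^ (1 - 2 * lam) * (n ^ (1 - 2 * lam) / log n) / i
      = β ^ (1 - 2 * lam) * n ^ (1 - 2 * lam) * (κ₁ / (i * log n))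
          / (1 + β * κ₂) ^ (1 - 2 * lam) := by ring
    _ ≤ β ^ (1 - 2 * lam) * n ^ (1 - 2 * lam) * p i n / (1 + β * κ₂) ^ (1 - 2 * lam) := by
        gcongr
        · have := hz.1.trans_le hz.2.1; positivity
        · exact hz.div_log_le hn hi
    _ ≤ phiW lam β (p i n) n := div_le_phiW hlam (hz.pos hn hi) hβ (by omega) hnp

lemma phiW_le_rpow (hz : IsZipfArray p κ₁ κ₂) (hlam : lam ≤ 1 / 2) (hβ : 0 < β) (hn : 2 ≤ n)
    (hi : i ∈ Icc 1 n) :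
    phiW lam β (p i n) n ≤ max (κ₁ ^ (2 * lam)) (κ₂ ^ (2 * lam)) * (i * log n) ^ (-(2 * lam)) := by
  have hL : 0 < log n := log_pos (by exact_mod_cast hn)
  have hi0 : (0 : ℝ) < i := by exact_mod_cast (mem_Icc.1 hi).1
  have hκ : ∀ κ, 0 < κ →
      (κ / (i * log n)) ^ (2 * lam) = κ ^ (2 * lam) * (i * log n) ^ (-(2 * lam)) := fun κ hκ => by
    rw [div_rpow hκ.le (by positivity), rpow_neg (by positivity), div_eq_mul_inv]
  have hp := _root_.phiW_le_rpow hlam (hz.pos hn hi) hβ (by omega : 0 < n)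
  rcases le_total 0 lam with h0 | h0
  · calc _ ≤ p i n ^ (2 * lam) := hp
      _ ≤ (κ₂ / (i * log n)) ^ (2 * lam) := by
          gcongr
          · exact (hz.pos hn hi).le
          · exact hz.le_div_log hn hi
      _ ≤ _ := by rw [hκ κ₂ (hz.1.trans_le hz.2.1)]; gcongr; exact le_max_right _ _
  · calc _ ≤ p i n ^ (2 * lam) := hp
      _ ≤ (κ₁ / (i * log n)) ^ (2 * lam) :=
          rpow_le_rpow_of_nonpos (by have := hz.1; positivity) (hz.div_log_le hn hi) (by linarith)
      _ ≤ _ := by rw [hκ κ₁ hz.1]; gcongr; exact le_max_left _ _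

lemma le_sum_phiW (hz : IsZipfArray p κ₁ κ₂) (hlam : lam ≤ 1 / 2) (hβ : 0 < β) :
    ∀ᶠ n : ℕ in atTop,
      κ₁ * β ^ (1 - 2 * lam) / (1 + β * κ₂) ^ (1 - 2 * lam) * (n ^ (1 - 2 * lam) / log n)
        * (log (log n) - 1) ≤ ∑ i ∈ Icc 1 n, phiW lam β (p i n) n := by
  have hlog : Tendsto (fun n : ℕ => log n) atTop atTop :=
    tendsto_log_atTop.comp tendsto_natCast_atTop_atTop
  filter_upwards [eventually_ge_atTop 2, hlog.eventually_ge_atTop 1] with n hn hL1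
  set L := log n
  have hn0 : (0 : ℝ) < n := by positivity
  have hLn : L ≤ n := (log_le_sub_one_of_pos hn0).trans (by linarith)
  have hc :
      0 ≤ κ₁ * β ^ (1 - 2 * lam) / (1 + β * κ₂) ^ (1 - 2 * lam) * (n ^ (1 - 2 * lam) / L) := by
    have := hz.1; have := hz.1.trans_le hz.2.1; positivity
  -- the indices `i > n / log n` alone contribute `≳ n ^ (1 - 2λ) / log n * log (log n)`
  set k := ⌊n / L⌋₊
  have hk1 : 1 ≤ k := Nat.le_floor (by rw [Nat.cast_one, le_div_iff₀ (by linarith)]; linarith)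
  have hkn : k ≤ n := Nat.floor_le_of_le (div_le_self hn0.le hL1)
  have hlogk : log k ≤ log n - log L := by
    rw [← log_div hn0.ne' (by positivity)]
    exact log_le_log (by exact_mod_cast hk1) (Nat.floor_le (by positivity))
  have hsub : Ioc k n ⊆ Icc 1 n := fun i hi => by
    rw [mem_Ioc] at hi; rw [mem_Icc]; omega
  calc _ ≤ κ₁ * β ^ (1 - 2 * lam) / (1 + β * κ₂) ^ (1 - 2 * lam) * (n ^ (1 - 2 * lam) / L)
          * ∑ i ∈ Ioc k n, (i : ℝ)⁻¹ := by
        gcongr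
        linarith [log_sub_log_sub_one_le_sum_Ioc_inv hkn]
    _ = ∑ i ∈ Ioc k n, κ₁ * β ^ (1 - 2 * lam) / (1 + β * κ₂) ^ (1 - 2 * lam)
          * (n ^ (1 - 2 * lam) / L) / i := by
        rw [mul_sum]; rfl
    _ ≤ ∑ i ∈ Ioc k n, phiW lam β (p i n) n := by
        refine sum_le_sum fun i hi => hz.le_phiW_of_le_mul_log hlam hβ hn (hsub hi) ?_
        have : n / L < i := (Nat.lt_floor_add_one _).trans_le (by exact_mod_cast (mem_Ioc.1 hi).1)
        rw [div_lt_iff₀ (by linarith)] at this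
        exact this.le
    _ ≤ ∑ i ∈ Icc 1 n, phiW lam β (p i n) n :=
        sum_le_sum_of_subset_of_nonneg hsub fun i hi _ => (hz.phiW_pos hβ hn hi).le

lemma sum_phiW_head_le (hz : IsZipfArray p κ₁ κ₂) (hlam : lam < 1 / 2) (hβ : 0 < β)
    {δ : ℝ} (hδ : 0 < δ) : ∃ C, ∀ n, 2 ≤ n →
      ∑ i ∈ Icc 1 n with δ < n * p i n, phiW lam β (p i n) n
        ≤ C * (n ^ (1 - 2 * lam) / log n) := by
  set K := max (κ₁ ^ (2 * lam)) (κ₂ ^ (2 * lam))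
  set C' := max 1 (-(2 * lam) + 1)⁻¹
  have hκ₂ : 0 < κ₂ := hz.1.trans_le hz.2.1
  have hK : 0 ≤ K := le_max_of_le_left (rpow_nonneg hz.1.le _)
  refine ⟨K * C' * (κ₂ / δ) ^ (1 - 2 * lam), fun n hn => ?_⟩
  have hL : 0 < log n := log_pos (by exact_mod_cast hn)
  set m := ⌊κ₂ / δ * n / log n⌋₊
  -- `δ < n * p i n ≤ κ₂ n / (i log n)` forces `i ≤ m`
  have hsub : {i ∈ Icc 1 n | δ < n * p i n} ⊆ Icc 1 m := fun i hi => by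
    rw [mem_filter] at hi
    have hi0 : (0 : ℝ) < i := by exact_mod_cast (mem_Icc.1 hi.1).1
    refine mem_Icc.2 ⟨(mem_Icc.1 hi.1).1, Nat.le_floor ?_⟩
    have : δ < κ₂ * n / (i * log n) :=
      hi.2.trans_le (by
        rw [mul_comm κ₂, mul_div_assoc]; gcongr; exact hz.le_div_log hn hi.1)
    rw [lt_div_iff₀ (by positivity)] at this
    rw [le_div_iff₀ hL, div_mul_eq_mul_div, le_div_iff₀ hδ]
    nlinarith
  have hm : (m : ℝ) * log n ≤ κ₂ / δ * n := by
    rw [← le_div_iff₀ hL]; exact Nat.floor_le (by positivity)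
  calc ∑ i ∈ Icc 1 n with δ < n * p i n, phiW lam β (p i n) n
      ≤ ∑ i ∈ Icc 1 n with δ < n * p i n, K * (i * log n) ^ (-(2 * lam)) :=
        sum_le_sum fun i hi => hz.phiW_le_rpow hlam.le hβ hn (mem_filter.1 hi).1
    _ ≤ ∑ i ∈ Icc 1 m, K * (i * log n) ^ (-(2 * lam)) :=
        sum_le_sum_of_subset_of_nonneg hsub fun i _ _ => by positivity
    _ = K * log n ^ (-(2 * lam)) * ∑ i ∈ Icc 1 m, (i : ℝ) ^ (-(2 * lam)) := by
        rw [mul_sum]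
        refine sum_congr rfl fun i _ => ?_
        rw [mul_rpow (by positivity) hL.le]; ring
    _ ≤ K * log n ^ (-(2 * lam)) * (C' * m ^ (-(2 * lam) + 1)) := by
        gcongr; exact sum_Icc_rpow_le (by linarith) m
    _ = K * C' * (m * log n) ^ (1 - 2 * lam) / log n := by
        rw [mul_rpow (by positivity) hL.le, show -(2 * lam) + 1 = 1 - 2 * lam by ring,
          sub_eq_add_neg, rpow_add hL, rpow_one]
        field_simp
    _ ≤ K * C' * (κ₂ / δ * n) ^ (1 - 2 * lam) / log n := by
        gcongr; linarith
    _ = K * C' * (κ₂ / δ) ^ (1 - 2 * lam) * (n ^ (1 - 2 * lam) / log n) := by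
        rw [mul_rpow (by positivity) (by positivity)]; ring

lemma tendsto_div_sum_phiW (hz : IsZipfArray p κ₁ κ₂) (hlam : lam ≤ 1 / 2) (hβ : 0 < β)
    {x : ℕ → ℝ} {K : ℝ} (hx : ∀ᶠ n in atTop, 0 ≤ x n ∧ x n ≤ K * (n ^ (1 - 2 * lam) / log n)) :
    Tendsto (fun n => x n / ∑ i ∈ Icc 1 n, phiW lam β (p i n) n) atTop (𝓝 0) := by
  set c := κ₁ * β ^ (1 - 2 * lam) / (1 + β * κ₂) ^ (1 - 2 * lam)
  have hc : 0 < c := by have := hz.1; have := hz.1.trans_le hz.2.1; positivity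
  have hg : Tendsto (fun n : ℕ => log (log n) - 1) atTop atTop :=
    tendsto_atTop_add_const_right _ _
      (tendsto_log_atTop.comp (tendsto_log_atTop.comp tendsto_natCast_atTop_atTop))
  refine squeeze_zero' ?_ ?_ ((tendsto_const_nhds (x := K / c)).div_atTop hg)
  · filter_upwards [hx, eventually_ge_atTop 2] with n hxn hn
    exact div_nonneg hxn.1 (sum_nonneg fun i hi => (hz.phiW_pos hβ hn hi).le)
  · filter_upwards [hx, eventually_ge_atTop 2, hz.le_sum_phiW hlam hβ,
      hg.eventually_gt_atTop 0] with n hxn hn hW hg0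
    have hL : 0 < log n := log_pos (by exact_mod_cast hn)
    have hS : 0 < (n : ℝ) ^ (1 - 2 * lam) / log n := by positivity
    calc x n / ∑ i ∈ Icc 1 n, phiW lam β (p i n) n
        ≤ K * (n ^ (1 - 2 * lam) / log n) / (c * (n ^ (1 - 2 * lam) / log n) * (log (log n) - 1)) :=
          div_le_div₀ (hxn.1.trans hxn.2) hxn.2 (by positivity) hW
      _ = K / c / (log (log n) - 1) := by field_simp

lemma tendsto_sum_phiW_head_div (hz : IsZipfArray p κ₁ κ₂) (hlam : lam < 1 / 2) (hβ : 0 < β)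
    {δ : ℝ} (hδ : 0 < δ) :
    Tendsto (fun n => (∑ i ∈ Icc 1 n with δ < n * p i n, phiW lam β (p i n) n)
      / ∑ i ∈ Icc 1 n, phiW lam β (p i n) n) atTop (𝓝 0) := by
  obtain ⟨C, hC⟩ := hz.sum_phiW_head_le hlam hβ hδ
  refine hz.tendsto_div_sum_phiW hlam.le hβ (K := C) ?_
  filter_upwards [eventually_ge_atTop 2] with n hn
  exact ⟨sum_nonneg fun i hi => (hz.phiW_pos hβ hn (mem_filter.1 hi).1).le, hC n hn⟩

lemma tendsto_sum_sq_phiW_div (hz : IsZipfArray p κ₁ κ₂) (hlam : lam ≤ 1 / 2) (hβ : 0 < β) :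
    Tendsto (fun n => (∑ i ∈ Icc 1 n, phiW lam β (p i n) n ^ 2)
      / (∑ i ∈ Icc 1 n, phiW lam β (p i n) n) ^ 2) atTop (𝓝 0) := by
  simp_rw [sq (∑ i ∈ Icc 1 _, _), ← div_div]
  refine hz.tendsto_div_sum_phiW hlam hβ (K := β ^ (1 - 2 * lam) * κ₂) ?_
  filter_upwards [eventually_ge_atTop 2] with n hn
  have hW : 0 < ∑ i ∈ Icc 1 n, phiW lam β (p i n) n :=
    sum_pos (fun i hi => hz.phiW_pos hβ hn hi) ⟨1, mem_Icc.2 ⟨le_rfl, by omega⟩⟩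
  have hL : 0 < log n := log_pos (by exact_mod_cast hn)
  have hκ₂ := hz.1.trans_le hz.2.1
  refine ⟨div_nonneg (sum_nonneg fun i _ => sq_nonneg _) hW.le,
    div_le_of_le_mul₀ hW.le (by positivity) ?_⟩
  rw [mul_sum]
  refine sum_le_sum fun i hi => ?_
  have hφ := hz.phiW_pos hβ hn hi (lam := lam)
  have hi1 : (1 : ℝ) ≤ i := by exact_mod_cast (mem_Icc.1 hi).1
  rw [sq]
  gcongr
  calc phiW lam β (p i n) n ≤ β ^ (1 - 2 * lam) * κ₂ * (n ^ (1 - 2 * lam) / log n) / i :=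
        hz.phiW_le_div hlam hβ hn hi
    _ ≤ _ := div_le_self (by positivity) hi1

end IsZipfArray

lemma ProbabilityTheory.iIndepFun.pairwise_indepFun_Icc {Ω β : Type*} [MeasurableSpace Ω]
    [MeasurableSpace β] {P : Measure Ω} {Y : ℕ → Ω → β} {n : ℕ}
    (h : iIndepFun (fun i : Fin n => Y (i.1 + 1)) P) :
    Set.Pairwise ↑(Icc 1 n) fun i j => IndepFun (Y i) (Y j) P := by
  intro i hi j hj hij
  simp only [coe_Icc, Set.mem_Icc] at hi hj
  have := h.indepFun (i := ⟨i - 1, by omega⟩) (j := ⟨j - 1, by omega⟩)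
    (by simp [Fin.ext_iff]; omega)
  simpa [Nat.sub_add_cancel hi.1, Nat.sub_add_cancel hj.1] using this

lemma eventually_forall_mem_Icc {Q : ℕ → ℕ → Prop}
    (h : ∀ n : ℕ, 2 ≤ n → ∀ i : ℕ, 1 ≤ i → i ≤ n → Q i n) :
    ∀ᶠ n in atTop, ∀ i ∈ Icc 1 n, Q i n :=
  (eventually_ge_atTop 2).mono fun n hn i hi => h n hn i (mem_Icc.1 hi).1 (mem_Icc.1 hi).2

theorem stmt_8_general {lam β κ₁ κ₂ : ℝ} (hlam : lam < 1/2) (hβ : 0 < β)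
    (p : ℕ → ℕ → ℝ) (hz : IsZipfArray p κ₁ κ₂)
    {Ω : Type*} [MeasurableSpace Ω] (P : Measure Ω) [IsProbabilityMeasure P]
    (U : ℕ → ℕ → Ω → ℝ)
    (hint : ∀ n : ℕ, 2 ≤ n → ∀ i : ℕ, 1 ≤ i → i ≤ n → Integrable (U i n) P)
    (hindep : ∀ n : ℕ, 2 ≤ n →
      iIndepFun
        (fun i : Fin n => U (i.1 + 1) n) P)
    (hUI : ∀ ε : ℝ, 0 < ε → ∃ N : ℝ, 0 < N ∧ ∀ n : ℕ, 2 ≤ n → ∀ i : ℕ, 1 ≤ i → i ≤ n →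
      ∫ ω in {ω | N * phiW lam β (p i n) n < |U i n ω|}, |U i n ω| ∂P
        ≤ ε * phiW lam β (p i n) n)
    (ℓ : ℝ)
    (hmean : ∀ ε : ℝ, 0 < ε → ∃ δ : ℝ, 0 < δ ∧ ∀ n : ℕ, 2 ≤ n → ∀ i : ℕ, 1 ≤ i → i ≤ n →
      (n : ℝ) * p i n ≤ δ →
      |(∫ ω, U i n ω ∂P) / phiW lam β (p i n) n - ℓ| ≤ ε) :
    TendstoInMeasure P
      (fun n ω => (∑ i ∈ Finset.Icc 1 n, U i n ω)
        / (∑ i ∈ Finset.Icc 1 n, phiW lam β (p i n) n))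
      atTop (fun _ => ℓ) := by
  have hpos : ∀ᶠ n in atTop, ∀ i ∈ Icc 1 n, 0 < phiW lam β (p i n) n :=
    eventually_forall_mem_Icc fun n hn i hi1 hin => hz.phiW_pos hβ hn (mem_Icc.2 ⟨hi1, hin⟩)
  have hne : ∀ᶠ n in atTop, (Icc 1 n).Nonempty :=
    (eventually_ge_atTop 1).mono fun n hn => nonempty_Icc.2 hn
  have hint' := eventually_forall_mem_Icc hint
  obtain ⟨N₀, hN₀, hUI₀⟩ := hUI 1 one_pos
  refine tendstoInMeasure_sum_div_sum (X := fun n i => U i n) hne hpos hint'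
    ((eventually_ge_atTop 2).mono fun n hn => (hindep n hn).pairwise_indepFun_Icc)
    (fun ε hε => (hUI ε hε).imp fun N hN => ⟨hN.1, eventually_forall_mem_Icc hN.2⟩)
    (hz.tendsto_sum_sq_phiW_div hlam.le hβ)
    (tendsto_sum_div_sum_of_tendsto_head (q := fun n i => n * p i n) (C := N₀ + 1)
      hne hpos ?_
      (fun ε hε => (hmean ε hε).imp fun δ hδ => ⟨hδ.1, eventually_forall_mem_Icc hδ.2⟩)
      fun δ hδ => hz.tendsto_sum_phiW_head_div hlam hβ hδ)
  filter_upwards [hint', hpos, eventually_forall_mem_Icc hUI₀] with n hint hpos hUI₀ i hi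
  have := integral_abs_le_add_setIntegral (hint i hi) (mul_nonneg hN₀.le (hpos i hi).le)
  linarith [abs_integral_le_integral_abs (f := U i n) (μ := P), hUI₀ i hi]

theorem stmt_8 {lam β κ₁ κ₂ : ℝ} (hlam : lam < 1/2) (hβ : 0 < β)
    (p : ℕ → ℕ → ℝ) (hz : IsZipfArray p κ₁ κ₂)
    {Ω : Type*} [MeasurableSpace Ω] (P : Measure Ω) [IsProbabilityMeasure P]
    (U : ℕ → ℕ → Ω → ℝ)
    (hmeas : ∀ i n, Measurable (U i n))
    (hint : ∀ n : ℕ, 2 ≤ n → ∀ i : ℕ, 1 ≤ i → i ≤ n → Integrable (U i n) P)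
    (hindep : ∀ n : ℕ, 2 ≤ n →
      iIndepFun
        (fun i : Fin n => U (i.1 + 1) n) P)
    (hUI : ∀ ε : ℝ, 0 < ε → ∃ N : ℝ, 0 < N ∧ ∀ n : ℕ, 2 ≤ n → ∀ i : ℕ, 1 ≤ i → i ≤ n →
      ∫ ω in {ω | N * phiW lam β (p i n) n < |U i n ω|}, |U i n ω| ∂P
        ≤ ε * phiW lam β (p i n) n)
    (ℓ : ℝ)
    (hmean : ∀ ε : ℝ, 0 < ε → ∃ δ : ℝ, 0 < δ ∧ ∀ n : ℕ, 2 ≤ n → ∀ i : ℕ, 1 ≤ i → i ≤ n →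
      (n : ℝ) * p i n ≤ δ →
      |(∫ ω, U i n ω ∂P) / phiW lam β (p i n) n - ℓ| ≤ ε) :
    TendstoInMeasure P
      (fun n ω => (∑ i ∈ Finset.Icc 1 n, U i n ω)
        / (∑ i ∈ Finset.Icc 1 n, phiW lam β (p i n) n))
      atTop (fun _ => ℓ) :=
  stmt_8_general hlam hβ p hz P U hint hindep hUI ℓ hmean
end
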